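/- arXiv:2409.09683 — 2 statements merged into one kernel-verified Lean document; each statement's English description precedes it below -/
import Mathlib

section
/- For every dimension d ≥ 2 and every tree T with k edges, there exists a constant c > 0 such that for every sufficiently large natural number n there exists a set E ⊆ ℝ^d of exactly n points such that the number of copies in E of the weighted tree T_w, where w is the constant weight assignment giving every edge weight 1, is at least c · n^(1 + k(d−1)/(d+1)). -/
/-- The standard dot product on `ℝ^d`. -/
noncomputable def dotProd {d : ℕ} (x y : Fin d → ℝ) : ℝ := ∑ i, x i * y i

/-- `φ` is a copy of the tree/graph `G` weighted by `w` inside the point set `P`: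
an injective map of the vertices into `P` such that the dot product of the images of
the endpoints of each edge equals the weight of that edge. -/
def IsWeightedCopy {V : Type} {d : ℕ} (G : SimpleGraph V) (w : G.edgeSet → ℝ)
    (P : Set (Fin d → ℝ)) (φ : V → (Fin d → ℝ)) : Prop :=
  Function.Injective φ ∧ (∀ u, φ u ∈ P) ∧
    ∀ u v (h : G.Adj u v),
      dotProd (φ u) (φ v) = w ⟨s(u, v), (G.mem_edgeSet).mpr h⟩

open SimpleGraph


/-- Build a map by walking up the parent chain, with explicit fuel. -/
def buildAux {V α : Type} (lvl : V → ℕ) (par : V → V) (rt : α) (st : α → ℕ → V → α) :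
    ℕ → V → α
  | 0, _ => rt
  | n+1, v => if lvl v = 0 then rt else st (buildAux lvl par rt st n (par v)) (lvl (par v)) v

lemma countLemma {V α : Type}
    (adj : V → V → Prop) (r : V) (par : V → V) (lvl : V → ℕ) (kk : ℕ)
    (h0 : ∀ v, lvl v = 0 ↔ v = r)
    (hpar : ∀ v, v ≠ r → lvl v = lvl (par v) + 1)
    (hlvl : ∀ v, lvl v ≤ kk)
    (hedge : ∀ u v, adj u v → (u = par v ∧ v ≠ r) ∨ (v = par u ∧ u ≠ r))
    (R : α → α → Prop) (hR : ∀ x y, R x y → R y x)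
    (A : ℕ → Set α) {b M : ℕ}
    (root : Fin b → Fin M → α)
    (hrootinj : ∀ c m c' m', root c m = root c' m' → c = c' ∧ m = m')
    (hrootA : ∀ c m, root c m ∈ A 0)
    (step : α → ℕ → V → Fin b → α)
    (hstepinj : ∀ x ℓ v c c', ℓ < kk → x ∈ A ℓ → step x ℓ v c = step x ℓ v c' → c = c')
    (hstepA : ∀ x ℓ v c, ℓ < kk → x ∈ A ℓ → step x ℓ v c ∈ A (ℓ+1))
    (hstepR : ∀ x ℓ v c, ℓ < kk → x ∈ A ℓ → R x (step x ℓ v c))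
    (tag : α → V) (htagroot : ∀ c m, tag (root c m) = r)
    (htagstep : ∀ x ℓ v c, ℓ < kk → x ∈ A ℓ → tag (step x ℓ v c) = v) :
    ∃ F : ((V → Fin b) × Fin M) → (V → α), Function.Injective F ∧
      ∀ cm, Function.Injective (F cm) ∧ (∀ v, F cm v ∈ A (lvl v)) ∧
        ∀ u v, adj u v → R (F cm u) (F cm v) := by
  classical
  set F : ((V → Fin b) × Fin M) → (V → α) := fun cm v =>
    buildAux lvl par (root (cm.1 r) cm.2) (fun x ℓ w => step x ℓ w (cm.1 w)) (lvl v) v with hF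
  have hroot0 : ∀ cm, F cm r = root (cm.1 r) cm.2 := by
    intro cm
    have h : lvl r = 0 := (h0 r).mpr rfl
    simp only [hF, h, buildAux]
  have hstepeq : ∀ cm v, v ≠ r →
      F cm v = step (F cm (par v)) (lvl (par v)) v (cm.1 v) := by
    intro cm v hv
    have h1 : lvl v = lvl (par v) + 1 := hpar v hv
    have h2 : lvl v ≠ 0 := fun h => hv ((h0 v).mp h)
    have hunfold : F cm v = buildAux lvl par (root (cm.1 r) cm.2)
        (fun x ℓ w => step x ℓ w (cm.1 w)) (lvl v) v := rfl
    rw [hunfold, h1]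
    simp only [buildAux]
    rw [if_neg h2]
  have hmain : ∀ (cm) (n : ℕ) (v : V), lvl v = n →
      F cm v ∈ A n ∧ tag (F cm v) = v := by
    intro cm n
    induction n with
    | zero =>
      intro v hv
      have hvr : v = r := (h0 v).mp hv
      subst hvr
      rw [hroot0]
      exact ⟨hrootA _ _, htagroot _ _⟩
    | succ n ih =>
      intro v hv
      have hvr : v ≠ r := fun h => by rw [h, (h0 r).mpr rfl] at hv; omega
      have h1 : lvl (par v) = n := by have := hpar v hvr; omega
      obtain ⟨hA, _⟩ := ih (par v) h1
      have hkk : n < kk := by have := hlvl v; omega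
      rw [hstepeq cm v hvr, h1]
      exact ⟨hstepA _ _ _ _ hkk hA, htagstep _ _ _ _ hkk hA⟩
  have hmemA : ∀ cm v, F cm v ∈ A (lvl v) := fun cm v => (hmain cm (lvl v) v rfl).1
  have htagF : ∀ cm v, tag (F cm v) = v := fun cm v => (hmain cm (lvl v) v rfl).2
  refine ⟨F, ?_, ?_⟩
  · intro cm cm' h
    have hr' : cm.1 r = cm'.1 r ∧ cm.2 = cm'.2 := by
      apply hrootinj
      rw [← hroot0, ← hroot0, h]
    have hc : ∀ v, cm.1 v = cm'.1 v := by
      intro v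
      by_cases hv : v = r
      · rw [hv]; exact hr'.1
      · have h1 := hstepeq cm v hv
        have h2 := hstepeq cm' v hv
        have heq : F cm v = F cm' v := by rw [h]
        rw [h1, h2] at heq
        have hpp : F cm (par v) = F cm' (par v) := by rw [h]
        rw [hpp] at heq
        have hkk : lvl (par v) < kk := by
          have := hpar v hv; have := hlvl v; omega
        exact hstepinj _ _ _ _ _ hkk (hmemA cm' (par v)) heq
    have : cm.1 = cm'.1 := funext hc
    exact Prod.ext this hr'.2
  · intro cm
    refine ⟨?_, hmemA cm, ?_⟩
    · intro u v huv
      have := htagF cm u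
      rw [huv, htagF cm v] at this
      exact this.symm
    · intro u v huv
      rcases hedge u v huv with ⟨hu, hvr⟩ | ⟨hv, hur⟩
      · have h1 := hstepeq cm v hvr
        subst hu
        rw [h1]
        have hkk : lvl (par v) < kk := by have := hpar v hvr; have := hlvl v; omega
        exact hstepR _ _ _ _ hkk (hmemA cm (par v))
      · apply hR
        have h1 := hstepeq cm u hur
        subst hv
        rw [h1]
        have hkk : lvl (par u) < kk := by have := hpar u hur; have := hlvl u; omega
        exact hstepR _ _ _ _ hkk (hmemA cm (par u))

open SimpleGraph

lemma tree_structure {V : Type} [Fintype V] (G : SimpleGraph V) (hT : G.IsTree) :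
    ∃ (r : V) (par : V → V) (lvl : V → ℕ),
      (∀ v, lvl v = 0 ↔ v = r) ∧
      (∀ v, v ≠ r → G.Adj (par v) v ∧ lvl v = lvl (par v) + 1) ∧
      (∀ u v, G.Adj u v → (u = par v ∧ v ≠ r) ∨ (v = par u ∧ u ≠ r)) ∧
      (∀ v, lvl v + 1 ≤ Fintype.card V) := by
  classical
  have hne : Nonempty V := hT.isConnected.nonempty
  obtain ⟨r⟩ := hne
  have hex := fun v => hT.existsUnique_path v r
  set pth : (v : V) → G.Walk v r := fun v => (hex v).choose with hpth
  have hpath : ∀ v, (pth v).IsPath := fun v => (hex v).choose_spec.1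
  have huniq : ∀ (v : V) (W : G.Walk v r), W.IsPath → pth v = W := by
    intro v W hW
    have h1 := (hex v).choose_spec.2 W hW
    exact h1.symm
  set par : V → V := fun v => (pth v).getVert 1 with hpar_def
  set lvl : V → ℕ := fun v => (pth v).length with hlvl_def
  have hpar_eq : ∀ (v : V) (W : G.Walk v r), W.IsPath → par v = W.getVert 1 := by
    intro v W hW
    rw [hpar_def]
    simp only
    rw [huniq v W hW]
  have hnil : pth r = Walk.nil := huniq r Walk.nil Walk.IsPath.nil
  have key : ∀ v, v ≠ r → ∃ (u : V) (h : G.Adj v u) (q : G.Walk u r),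
      q.IsPath ∧ pth v = Walk.cons h q ∧ par v = u := by
    intro v hv
    obtain ⟨u, h, q, hq⟩ := Walk.exists_eq_cons_of_ne hv (pth v)
    refine ⟨u, h, q, ?_, hq, ?_⟩
    · have := hpath v
      rw [hq] at this
      exact this.of_cons
    · rw [hpar_def]
      simp only
      rw [hq, Walk.getVert_cons_succ, Walk.getVert_zero]
  have h0 : ∀ v, lvl v = 0 ↔ v = r := by
    intro v
    constructor
    · intro h
      exact Walk.eq_of_length_eq_zero h
    · intro h
      subst h
      rw [hlvl_def]
      simp only
      rw [hnil]
      rfl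
  refine ⟨r, par, lvl, h0, ?_, ?_, ?_⟩
  · intro v hv
    obtain ⟨u, h, q, hqpath, hcons, hparv⟩ := key v hv
    constructor
    · rw [hparv]; exact h.symm
    · rw [hparv, hlvl_def]
      simp only
      rw [hcons, Walk.length_cons, huniq u q hqpath]
  · intro u v huv
    by_cases hvr : v = r
    · right
      have huv' : G.Adj u r := hvr ▸ huv
      have hur : u ≠ r := fun h => G.irrefl (h ▸ huv')
      refine ⟨?_, hur⟩
      have hW : (Walk.cons huv' Walk.nil : G.Walk u r).IsPath :=
        Walk.IsPath.nil.cons (by simp [hur])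
      have := hpar_eq u _ hW
      rw [this, Walk.getVert_cons_succ, Walk.getVert_zero, hvr]
    · by_cases hmem : u ∈ (pth v).support
      · left
        refine ⟨?_, hvr⟩
        obtain ⟨u', h, q, hqpath, hcons, hparv⟩ := key v hvr
        have hunev : u ≠ v := fun h => G.irrefl (h ▸ huv)
        have hmemq : u ∈ q.support := by
          rw [hcons, Walk.support_cons] at hmem
          rcases List.mem_cons.mp hmem with h1 | h1
          · exact absurd h1 hunev
          · exact h1
        have hvq : v ∉ q.support := by
          have hnd := (hpath v).support_nodup
          rw [hcons, Walk.support_cons] at hnd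
          exact (List.nodup_cons.mp hnd).1
        have hW : (Walk.cons huv.symm (q.dropUntil u hmemq) : G.Walk v r).IsPath := by
          apply (hqpath.dropUntil hmemq).cons
          intro hc
          exact hvq (Walk.support_dropUntil_subset q hmemq hc)
        have := hpar_eq v _ hW
        rw [this, Walk.getVert_cons_succ, Walk.getVert_zero]
      · right
        have hur : u ≠ r := fun h => hmem (h ▸ (pth v).end_mem_support)
        refine ⟨?_, hur⟩
        have hW : (Walk.cons huv (pth v) : G.Walk u r).IsPath := (hpath v).cons hmem
        have := hpar_eq u _ hW
        rw [this, Walk.getVert_cons_succ, Walk.getVert_zero]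
  · intro v
    exact (hpath v).length_lt


/-- A point of `ℝ^d` supported on the first three coordinates. -/
noncomputable def ptv {d : ℕ} (x y z : ℝ) : Fin d → ℝ := fun i =>
  if (i : ℕ) = 0 then x else if (i : ℕ) = 1 then y else if (i : ℕ) = 2 then z else 0

lemma sum_if_coord {d : ℕ} (j : ℕ) (hj : j < d) (c : ℝ) :
    (∑ i : Fin d, if (i : ℕ) = j then c else 0) = c := by
  rw [Finset.sum_eq_single (⟨j, hj⟩ : Fin d)]
  · simp
  · intro i _ hi
    rw [if_neg]
    intro h
    exact hi (Fin.ext h)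
  · simp

lemma sum_if_coord_zero {d : ℕ} (j : ℕ) :
    (∑ i : Fin d, if (i : ℕ) = j then (0:ℝ) else 0) = 0 := by simp

lemma dot_ptv_split {d : ℕ} (x y z x' y' z' : ℝ) :
    dotProd (ptv (d := d) x y z) (ptv x' y' z') =
      (∑ i : Fin d, if (i : ℕ) = 0 then x * x' else 0)
      + (∑ i : Fin d, if (i : ℕ) = 1 then y * y' else 0)
      + (∑ i : Fin d, if (i : ℕ) = 2 then z * z' else 0) := by
  rw [dotProd, ← Finset.sum_add_distrib, ← Finset.sum_add_distrib]
  apply Finset.sum_congr rfl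
  intro i _
  by_cases h0 : (i : ℕ) = 0 <;> by_cases h1 : (i : ℕ) = 1 <;> by_cases h2 : (i : ℕ) = 2 <;>
    simp [ptv, h0, h1, h2] <;> omega

lemma dot_ptv {d : ℕ} (hd : 2 ≤ d) (x y x' y' : ℝ) :
    dotProd (ptv (d := d) x y 0) (ptv x' y' 0) = x * x' + y * y' := by
  rw [dot_ptv_split, sum_if_coord 0 (by omega), sum_if_coord 1 (by omega)]
  simp

lemma dot_ptv3 {d : ℕ} (hd : 3 ≤ d) (x y z x' y' z' : ℝ) :
    dotProd (ptv (d := d) x y z) (ptv x' y' z') = x * x' + y * y' + z * z' := by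
  rw [dot_ptv_split, sum_if_coord 0 (by omega), sum_if_coord 1 (by omega),
    sum_if_coord 2 (by omega)]

lemma ptv_apply0 {d : ℕ} (h : 0 < d) (x y z : ℝ) : ptv (d := d) x y z ⟨0, h⟩ = x := by
  simp [ptv]

lemma ptv_apply1 {d : ℕ} (h : 1 < d) (x y z : ℝ) : ptv (d := d) x y z ⟨1, h⟩ = y := by
  simp [ptv]

lemma ptv_apply2 {d : ℕ} (h : 2 < d) (x y z : ℝ) : ptv (d := d) x y z ⟨2, h⟩ = z := by
  simp [ptv]

lemma dotProd_comm {d : ℕ} (x y : Fin d → ℝ) : dotProd x y = dotProd y x := by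
  unfold dotProd
  exact Finset.sum_congr rfl (fun i _ => mul_comm _ _)

/-- counting: an injection from a fintype into a set of maps landing in a finset. -/
lemma ncard_ge_of_inj {V β : Type} [Fintype V] {γ : Type} [Fintype γ]
    (S : Set (V → β)) (E : Finset β)
    (hSE : ∀ φ ∈ S, ∀ v, φ v ∈ (E : Set β))
    (F : γ → (V → β)) (hF : Function.Injective F) (hFS : ∀ x, F x ∈ S) :
    Fintype.card γ ≤ S.ncard := by
  classical
  have hfin : S.Finite := by
    apply Set.Finite.subset (Set.Finite.pi (fun _ : V => E.finite_toSet))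
    intro φ hφ
    rw [Set.mem_pi]
    intro v _
    exact hSE φ hφ v
  have h1 : (↑(Finset.univ.image F) : Set (V → β)) ⊆ S := by
    intro φ hφ
    simp only [Finset.coe_image, Set.mem_image] at hφ
    obtain ⟨x, _, rfl⟩ := hφ
    exact hFS x
  calc Fintype.card γ = (Finset.univ.image F).card := by
        rw [Finset.card_image_of_injective _ hF, Finset.card_univ]
    _ = (↑(Finset.univ.image F) : Set (V → β)).ncard := (Set.ncard_coe_finset _).symm
    _ ≤ S.ncard := Set.ncard_le_ncard h1 hfin

/-- pad a finset to any larger cardinality in an infinite type. -/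
lemma exists_pad {β : Type} [Infinite β] [DecidableEq β] (s : Finset β) :
    ∀ n, s.card ≤ n → ∃ t : Finset β, s ⊆ t ∧ t.card = n := by
  intro n
  induction n with
  | zero => intro h; exact ⟨s, subset_rfl, Nat.le_zero.mp h⟩
  | succ n ih =>
    intro h
    by_cases h' : s.card ≤ n
    · obtain ⟨t, hst, ht⟩ := ih h'
      obtain ⟨x, hx⟩ := Infinite.exists_notMem_finset t
      exact ⟨insert x t, hst.trans (Finset.subset_insert _ _),
        by rw [Finset.card_insert_of_notMem hx, ht]⟩
    · exact ⟨s, subset_rfl, by omega⟩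

lemma arith1 (k ℓ M u i j : ℕ) (hl : ℓ ≤ k) (hM : 1 ≤ M) (hu : 1 ≤ u) (hi : 1 ≤ i)
    (hui : u * i ≤ M) (hj1 : (k+1-ℓ)*M + 1 ≤ j) (hj2 : j ≤ (k+2+ℓ)*M) :
    (k+1-(ℓ+1))*M + 2 ≤ u*i + j ∧ u*i + j ≤ (k+2+(ℓ+1))*M := by
  have e1 : k + 1 - ℓ = (k - ℓ) + 1 := by omega
  have e2 : k + 1 - (ℓ+1) = k - ℓ := by omega
  have e3 : k+2+(ℓ+1) = (k+2+ℓ) + 1 := by omega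
  rw [e1, Nat.succ_mul] at hj1
  rw [e2, e3, Nat.succ_mul]
  have hs : 1 ≤ u * i := Nat.one_le_iff_ne_zero.mpr (by positivity)
  generalize (k - ℓ) * M = P at *
  generalize (k+2+ℓ) * M = Q at *
  generalize u * i = s at *
  omega

lemma arith2 (k ℓ M u i N : ℕ) (hl : ℓ + 1 ≤ k) (hM : 1 ≤ M) (hu : 1 ≤ u) (hi : 1 ≤ i)
    (hui : u*i ≤ M) (hN1 : (k+1-ℓ)*M + 2 ≤ N) (hN2 : N ≤ (k+2+ℓ)*M) :
    u*i ≤ N ∧ (k+1-(ℓ+1))*M + 1 ≤ N - u*i ∧ N - u*i ≤ (k+2+(ℓ+1))*M := by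
  have e1 : k + 1 - ℓ = (k - ℓ - 1) + 2 := by omega
  have e2 : k + 1 - (ℓ+1) = (k - ℓ - 1) + 1 := by omega
  have e3 : k+2+(ℓ+1) = (k+2+ℓ) + 1 := by omega
  rw [e1] at hN1
  rw [e2, e3]
  have hexp1 : ((k - ℓ - 1) + 2) * M = (k-ℓ-1)*M + M + M := by ring
  have hexp2 : ((k - ℓ - 1) + 1) * M = (k-ℓ-1)*M + M := by ring
  have hexp3 : ((k+2+ℓ) + 1) * M = (k+2+ℓ)*M + M := by ring
  rw [hexp1] at hN1
  rw [hexp2, hexp3]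
  generalize (k - ℓ - 1) * M = P at *
  generalize (k+2+ℓ) * M = Q at *
  generalize hs : u * i = s at *
  omega

lemma arith3 (k ℓ M x : ℕ) (hl : ℓ ≤ k) (hM : 1 ≤ M) :
    ((k+1-k)*M + 1 ≤ (k+1-ℓ)*M + 1) ∧ ((k+2+ℓ)*M ≤ (k+2+k)*M) ∧ (2 ≤ (k+1-ℓ)*M + 2) := by
  refine ⟨Nat.add_le_add_right (Nat.mul_le_mul_right _ (by omega)) _,
    Nat.mul_le_mul_right _ (by omega), by omega⟩

set_option maxHeartbeats 1000000 in
lemma grid_case {d : ℕ} (hd : 2 ≤ d) {V : Type} [Fintype V] (G : SimpleGraph V)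
    (hT : G.IsTree) (k b : ℕ) (hcard : Fintype.card V = k + 1) (hb : 1 ≤ b) :
    ∃ E0 : Finset (Fin d → ℝ), E0.card ≤ (4*k+4) * ((k+1)*b)^3 ∧
      ∀ E : Finset (Fin d → ℝ), E0 ⊆ E →
        b ^ (k+3) ≤ ({φ : V → (Fin d → ℝ) |
          IsWeightedCopy G (fun _ => (1:ℝ)) (E : Set (Fin d → ℝ)) φ}).ncard := by
  classical
  obtain ⟨r, par, lvl, h0, hparfull, hedge, hlvlb⟩ := tree_structure G hT
  have hpar : ∀ v, v ≠ r → lvl v = lvl (par v) + 1 := fun v hv => (hparfull v hv).2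
  have hlvl : ∀ v, lvl v ≤ k := fun v => by have := hlvlb v; omega
  set m : ℕ := (k+1)*b with hm
  have hm1 : 1 ≤ m := Nat.mul_pos (by omega) hb
  set M' : ℕ := m^2 with hM'
  have hM'1 : 1 ≤ M' := by rw [hM']; exact Nat.one_le_pow _ _ (by omega)
  have h0d : 0 < d := by omega
  have h1d : 1 < d := by omega
  set i0 : Fin d := ⟨0, h0d⟩ with hi0
  set i1 : Fin d := ⟨1, h1d⟩ with hi1
  set e : V ≃ Fin (k+1) := Fintype.equivFinOfCardEq hcard with he
  set idx : V → Fin b → ℕ := fun v c => b * (e v) + c + 1 with hidx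
  have hidx1 : ∀ v c, 1 ≤ idx v c := fun v c => Nat.succ_le_succ (Nat.zero_le _)
  have hidxm : ∀ v c, idx v c ≤ m := by
    intro v c
    have h1 : (e v : ℕ) ≤ k := Nat.lt_succ_iff.mp (e v).isLt
    have h2 : (c : ℕ) + 1 ≤ b := c.isLt
    calc b * (e v) + (c : ℕ) + 1 ≤ b * k + ((c:ℕ) + 1) := by
          have := Nat.mul_le_mul_left b h1
          omega
      _ ≤ b * k + b := by omega
      _ = (k+1)*b := by ring
  have hidxinj : ∀ v c v' c', idx v c = idx v' c' → v = v' ∧ c = c' := by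
    intro v c v' c' h
    have h' : b * ↑(e v) + ↑c = b * ↑(e v') + ↑c' := Nat.succ_injective h
    have hdiv : ∀ (w : V) (cc : Fin b), (b * ↑(e w) + ↑cc) / b = (e w : ℕ) := by
      intro w cc
      rw [Nat.mul_add_div (by omega)]
      simp [Nat.div_eq_of_lt cc.isLt]
    have hmod : ∀ (w : V) (cc : Fin b), (b * ↑(e w) + ↑cc) % b = (cc : ℕ) := by
      intro w cc
      rw [Nat.mul_add_mod]
      exact Nat.mod_eq_of_lt cc.isLt
    have hv : (e v : ℕ) = (e v' : ℕ) := by rw [← hdiv v c, ← hdiv v' c', h']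
    have hc : (c : ℕ) = (c' : ℕ) := by rw [← hmod v c, ← hmod v' c', h']
    exact ⟨e.injective (Fin.ext hv), Fin.ext hc⟩
  set decode : ℝ → V := fun y => e.symm ⟨min k ((Int.toNat ⌊y⌋ - 1) / b), by omega⟩
    with hdec
  have hdecode : ∀ v c, decode ((idx v c : ℕ) : ℝ) = v := by
    intro v c
    refine Eq.trans ?_ (Equiv.symm_apply_apply e v)
    simp only [hdec]
    congr 1
    apply Fin.ext
    show min k ((Int.toNat ⌊((idx v c : ℕ):ℝ)⌋ - 1) / b) = ((e v : Fin (k+1)) : ℕ)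
    rw [Int.floor_natCast, Int.toNat_natCast]
    have h1 : idx v c - 1 = b * ↑(e v) + ↑c := by simp [hidx]
    have h2 : (b * ↑(e v) + ↑c) / b = (e v : ℕ) := by
      rw [Nat.mul_add_div (by omega)]
      simp [Nat.div_eq_of_lt c.isLt]
    rw [h1, h2]
    exact min_eq_right (Nat.lt_succ_iff.mp (e v).isLt)
  set loJ : ℕ → ℕ := fun ℓ => (k + 1 - ℓ) * M' + 1 with hloJ
  set hiJ : ℕ → ℕ := fun ℓ => (k + 2 + ℓ) * M' with hhiJ
  set loN : ℕ → ℕ := fun ℓ => (k + 1 - ℓ) * M' + 2 with hloN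
  set A : ℕ → Set (Fin d → ℝ) := fun ℓ =>
    if ℓ % 2 = 0 then
      {x | ∃ i j : ℕ, 1 ≤ i ∧ i ≤ m ∧ loJ ℓ ≤ j ∧ j ≤ hiJ ℓ ∧ x = ptv (i:ℝ) (j:ℝ) 0}
    else
      {x | ∃ u N : ℕ, 1 ≤ u ∧ u ≤ m ∧ loN ℓ ≤ N ∧ N ≤ hiJ ℓ ∧
        x = ptv ((u:ℝ)/(N:ℝ)) (1/(N:ℝ)) 0} with hA
  set root : Fin b → Fin M' → (Fin d → ℝ) :=
    fun c mm => ptv ((idx r c : ℕ) : ℝ) (((loJ 0 + (mm:ℕ) : ℕ)) : ℝ) 0 with hroot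
  set step : (Fin d → ℝ) → ℕ → V → Fin b → (Fin d → ℝ) := fun x ℓ v c =>
    if ℓ % 2 = 0 then
      ptv ((idx v c : ℝ) / ((idx v c : ℝ) * x i0 + x i1))
        (1 / ((idx v c : ℝ) * x i0 + x i1)) 0
    else
      ptv ((idx v c : ℕ) : ℝ) ((1 - x i0 * (idx v c : ℝ)) / x i1) 0 with hstep
  set tag : (Fin d → ℝ) → V := fun x => if 1 ≤ x i1 then decode (x i0)
    else decode (x i0 / x i1) with htag
  -- basic coordinate evaluations
  have hpt0 : ∀ x y z : ℝ, ptv (d := d) x y z i0 = x := fun x y z => ptv_apply0 h0d x y z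
  have hpt1 : ∀ x y z : ℝ, ptv (d := d) x y z i1 = y := fun x y z => ptv_apply1 h1d x y z
  -- countLemma hypotheses
  have hrootinj : ∀ c mm c' mm', root c mm = root c' mm' → c = c' ∧ mm = mm' := by
    intro c mm c' mm' h
    have h0' := congrFun h i0
    have h1' := congrFun h i1
    simp only [hroot, hpt0, hpt1] at h0' h1'
    have hc : idx r c = idx r c' := Nat.cast_injective h0'
    have hj : loJ 0 + (mm : ℕ) = loJ 0 + (mm' : ℕ) := Nat.cast_injective h1'
    exact ⟨(hidxinj _ _ _ _ hc).2, Fin.ext (Nat.add_left_cancel hj)⟩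
  have hrootA : ∀ c mm, root c mm ∈ A 0 := by
    intro c mm
    simp only [hA]
    rw [if_pos (by norm_num)]
    refine ⟨idx r c, loJ 0 + (mm : ℕ), hidx1 r c, hidxm r c, Nat.le_add_right _ _, ?_, by simp only [hroot]⟩
    have h1 : (mm : ℕ) < M' := mm.isLt
    have h2 : hiJ 0 = loJ 0 + M' - 1 := by
      simp only [hhiJ, hloJ]
      simp only [Nat.sub_zero, Nat.add_zero]
      have hexp : (k+2)*M' = (k+1)*M' + M' := by ring
      rw [hexp]
      generalize (k+1)*M' = P
      omega
    rw [h2]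
    generalize hgen : loJ 0 = P at *
    omega
  have hstepA : ∀ x ℓ v c, ℓ < k → x ∈ A ℓ → step x ℓ v c ∈ A (ℓ+1) := by
    intro x ℓ v c hk hx
    by_cases hpe : ℓ % 2 = 0
    · simp only [hA] at hx
      rw [if_pos hpe] at hx
      obtain ⟨i, j, hi1', him, hj1, hj2, hxeq⟩ := hx
      set nN : ℕ := idx v c * i + j with hnN
      have hcast : ((nN : ℕ) : ℝ) = (idx v c : ℝ) * (i:ℝ) + (j:ℝ) := by
        rw [hnN]; push_cast; ring
      have hbounds := arith1 k ℓ M' (idx v c) i j (by omega) hM'1 (hidx1 v c) hi1'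
        (by rw [hM', pow_two]; exact Nat.mul_le_mul (hidxm v c) him)
        (by simp only [hloJ] at hj1; exact hj1) (by simp only [hhiJ] at hj2; exact hj2)
      simp only [hstep]
      simp only [if_pos hpe]
      rw [hxeq, hpt0, hpt1, ← hcast]
      simp only [hA]
      rw [if_neg (show ¬((ℓ+1) % 2 = 0) by omega)]
      exact ⟨idx v c, nN, hidx1 v c, hidxm v c,
        by simp only [hloN]; exact hbounds.1, by simp only [hhiJ]; exact hbounds.2, rfl⟩
    · simp only [hA] at hx
      rw [if_neg hpe] at hx
      obtain ⟨u, N, hu1, hum, hN1, hN2, hxeq⟩ := hx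
      have hbounds := arith2 k ℓ M' u (idx v c) N (by omega) hM'1 hu1 (hidx1 v c)
        (by rw [hM', pow_two]; exact Nat.mul_le_mul hum (hidxm v c))
        (by simp only [hloN] at hN1; exact hN1) (by simp only [hhiJ] at hN2; exact hN2)
      set nj : ℕ := N - u * idx v c with hnj
      have h2N : 2 ≤ N := le_trans (by simp only [hloN]; exact Nat.le_add_left 2 _) hN1
      have hNpos : (0:ℝ) < (N:ℝ) := by exact_mod_cast (by omega : 0 < N)
      have hcast : ((nj : ℕ) : ℝ) = (N:ℝ) - (u:ℝ) * (idx v c : ℝ) := by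
        rw [hnj, Nat.cast_sub hbounds.1]
        push_cast; ring
      have hval : (1 - ((u:ℝ)/(N:ℝ)) * (idx v c : ℝ)) / (1/(N:ℝ)) = ((nj : ℕ) : ℝ) := by
        rw [hcast]
        field_simp
      simp only [hstep]
      simp only [if_neg hpe]
      rw [hxeq, hpt0, hpt1, hval]
      simp only [hA]
      rw [if_pos (show (ℓ+1) % 2 = 0 by omega)]
      exact ⟨idx v c, nj, hidx1 v c, hidxm v c,
        by simp only [hloJ]; exact hbounds.2.1, by simp only [hhiJ]; exact hbounds.2.2, rfl⟩
  have hstepR : ∀ x ℓ v c, ℓ < k → x ∈ A ℓ → dotProd x (step x ℓ v c) = 1 := by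
    intro x ℓ v c hk hx
    by_cases hpe : ℓ % 2 = 0
    · simp only [hA] at hx; rw [if_pos hpe] at hx
      obtain ⟨i, j, hi1', him, hj1, hj2, hxeq⟩ := hx
      have hjpos : (0:ℝ) < (j:ℝ) := by
        have h1j : 1 ≤ j := le_trans (by simp only [hloJ]; exact Nat.le_add_left 1 _) hj1
        exact_mod_cast (by omega : 0 < j)
      have hipos : (0:ℝ) < (i:ℝ) := by exact_mod_cast hi1'
      have hxpos : (0:ℝ) < (idx v c : ℝ) := by exact_mod_cast hidx1 v c
      have hden : (0:ℝ) < (idx v c : ℝ) * (i:ℝ) + (j:ℝ) := by positivity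
      simp only [hstep]
      simp only [if_pos hpe]
      rw [hxeq, hpt0, hpt1, dot_ptv hd]
      field_simp
    · simp only [hA] at hx; rw [if_neg hpe] at hx
      obtain ⟨u, N, hu1, hum, hN1, hN2, hxeq⟩ := hx
      have hNpos : (0:ℝ) < (N:ℝ) := by
        have : 2 ≤ N := le_trans (by simp only [hloN]; exact Nat.le_add_left 2 _) hN1
        have : (0:ℕ) < N := by omega
        exact_mod_cast this
      simp only [hstep]
      simp only [if_neg hpe]
      rw [hxeq, hpt0, hpt1, dot_ptv hd]
      field_simp
      ring
  have htagroot : ∀ c mm, tag (root c mm) = r := by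
    intro c mm
    simp only [htag, hroot, hpt0, hpt1]
    rw [if_pos]
    · exact hdecode r c
    · have hl1 : 1 ≤ loJ 0 := by simp only [hloJ]; exact Nat.le_add_left 1 _
      have : 1 ≤ loJ 0 + (mm:ℕ) := le_trans hl1 (Nat.le_add_right _ _)
      exact_mod_cast this
  have htagstep : ∀ x ℓ v c, ℓ < k → x ∈ A ℓ → tag (step x ℓ v c) = v := by
    intro x ℓ v c hk hx
    by_cases hpe : ℓ % 2 = 0
    · simp only [hA] at hx; rw [if_pos hpe] at hx
      obtain ⟨i, j, hi1', him, hj1, hj2, hxeq⟩ := hx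
      set nN : ℕ := idx v c * i + j with hnN
      have hcast : ((nN : ℕ) : ℝ) = (idx v c : ℝ) * (i:ℝ) + (j:ℝ) := by
        rw [hnN]; push_cast; ring
      have hnN2 : 2 ≤ nN := by
        have h1 : 1 ≤ idx v c * i := Nat.one_le_iff_ne_zero.mpr
          (Nat.mul_ne_zero (by have := hidx1 v c; omega) (by omega))
        have h2 : 1 ≤ j := le_trans (by simp only [hloJ]; exact Nat.le_add_left 1 _) hj1
        omega
      have hNpos : (0:ℝ) < ((nN:ℕ):ℝ) := by exact_mod_cast Nat.lt_of_lt_of_le (by omega) hnN2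
      simp only [hstep]
      simp only [if_pos hpe]
      rw [hxeq, hpt0, hpt1, ← hcast]
      simp only [htag, hpt0, hpt1]
      rw [if_neg]
      · have harg : (idx v c : ℝ) / ((nN:ℕ):ℝ) / (1 / ((nN:ℕ):ℝ)) = ((idx v c : ℕ):ℝ) := by
          field_simp
        rw [harg, hdecode]
      · push_neg
        rw [div_lt_one hNpos]
        exact_mod_cast hnN2
    · simp only [hA] at hx; rw [if_neg hpe] at hx
      obtain ⟨u, N, hu1, hum, hN1, hN2, hxeq⟩ := hx
      have hbounds := arith2 k ℓ M' u (idx v c) N (by omega) hM'1 hu1 (hidx1 v c)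
        (by rw [hM', pow_two]; exact Nat.mul_le_mul hum (hidxm v c))
        (by simp only [hloN] at hN1; exact hN1) (by simp only [hhiJ] at hN2; exact hN2)
      set nj : ℕ := N - u * idx v c with hnj
      have hNpos : (0:ℝ) < (N:ℝ) := by
        have : 2 ≤ N := le_trans (by simp only [hloN]; exact Nat.le_add_left 2 _) hN1
        have h2 : (0:ℕ) < N := by omega
        exact_mod_cast h2
      have hcast : ((nj : ℕ) : ℝ) = (N:ℝ) - (u:ℝ) * (idx v c : ℝ) := by
        rw [hnj, Nat.cast_sub hbounds.1]
        push_cast; ring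
      have hval : (1 - ((u:ℝ)/(N:ℝ)) * (idx v c : ℝ)) / (1/(N:ℝ)) = ((nj : ℕ) : ℝ) := by
        rw [hcast]
        field_simp
      simp only [hstep]
      simp only [if_neg hpe]
      rw [hxeq, hpt0, hpt1, hval]
      simp only [htag, hpt0, hpt1]
      rw [if_pos]
      · exact hdecode v c
      · have h1 : 1 ≤ nj := le_trans (Nat.le_add_left 1 _) hbounds.2.1
        exact_mod_cast h1
  have hstepinj : ∀ x ℓ v c c', ℓ < k → x ∈ A ℓ → step x ℓ v c = step x ℓ v c' → c = c' := by
    intro x ℓ v c c' hk hx heq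
    by_cases hpe : ℓ % 2 = 0
    · simp only [hA] at hx; rw [if_pos hpe] at hx
      obtain ⟨i, j, hi1', him, hj1, hj2, hxeq⟩ := hx
      simp only [hstep, if_pos hpe] at heq
      have h1' := congrFun heq i1
      rw [hxeq] at h1'
      simp only [hpt0, hpt1] at h1'
      have hipos : (0:ℝ) < (i:ℝ) := by exact_mod_cast (by omega : 0 < i)
      have hjpos : (0:ℝ) < (j:ℝ) := by
        have h1j : 1 ≤ j := le_trans (by simp only [hloJ]; exact Nat.le_add_left 1 _) hj1
        exact_mod_cast (by omega : 0 < j)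
      have hxc : (0:ℝ) < (idx v c:ℝ) := by exact_mod_cast (by have := hidx1 v c; omega : 0 < idx v c)
      have hxc' : (0:ℝ) < (idx v c':ℝ) := by exact_mod_cast (by have := hidx1 v c'; omega : 0 < idx v c')
      have hden : (0:ℝ) < (idx v c:ℝ) * i + j := by positivity
      have hden' : (0:ℝ) < (idx v c':ℝ) * i + j := by positivity
      have hAB : (idx v c : ℝ) * i + j = (idx v c' : ℝ) * i + j := by
        rw [div_eq_div_iff (ne_of_gt hden) (ne_of_gt hden')] at h1'
        linarith [h1']
      have hidxeq : (idx v c : ℝ) = (idx v c' : ℝ) := by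
        have h2 : (idx v c : ℝ) * i = (idx v c' : ℝ) * i := by linarith
        exact mul_right_cancel₀ (ne_of_gt hipos) h2
      exact (hidxinj v c v c' (Nat.cast_injective hidxeq)).2
    · simp only [hA] at hx; rw [if_neg hpe] at hx
      simp only [hstep, if_neg hpe] at heq
      have h0' := congrFun heq i0
      simp only [hpt0] at h0'
      exact (hidxinj v c v c' (Nat.cast_injective h0')).2
  obtain ⟨F, hFinj, hFprop⟩ := countLemma G.Adj r par lvl k h0 hpar hlvl hedge
    (fun x y => dotProd x y = 1) (fun x y h => (dotProd_comm y x).trans h)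
    A root hrootinj hrootA step hstepinj hstepA hstepR tag htagroot htagstep
  set PF : Finset (Fin d → ℝ) := ((Finset.Icc 1 m) ×ˢ (Finset.Icc (loJ k) (hiJ k))).image
      (fun p => ptv (p.1:ℝ) (p.2:ℝ) 0) with hPF
  set QF : Finset (Fin d → ℝ) := ((Finset.Icc 1 m) ×ˢ (Finset.Icc (loN k) (hiJ k))).image
      (fun p => ptv ((p.1:ℝ)/(p.2:ℝ)) (1/(p.2:ℝ)) 0) with hQF
  refine ⟨PF ∪ QF, ?_, ?_⟩
  · have hP : PF.card ≤ m * hiJ k := by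
      refine le_trans Finset.card_image_le ?_
      rw [Finset.card_product, Nat.card_Icc, Nat.card_Icc]
      have e1 : m + 1 - 1 = m := by simp
      rw [e1]
      have h1 : 1 ≤ loJ k := by simp only [hloJ]; exact Nat.le_add_left 1 _
      have h2 : hiJ k + 1 - loJ k ≤ hiJ k :=
        le_trans (Nat.sub_le_sub_left h1 _) (le_of_eq (by simp))
      exact Nat.mul_le_mul_left _ h2
    have hQ : QF.card ≤ m * hiJ k := by
      refine le_trans Finset.card_image_le ?_
      rw [Finset.card_product, Nat.card_Icc, Nat.card_Icc]
      have e1 : m + 1 - 1 = m := by simp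
      rw [e1]
      have h1 : 1 ≤ loN k := by
        simp only [hloN]
        exact le_trans one_le_two (Nat.le_add_left 2 _)
      have h2 : hiJ k + 1 - loN k ≤ hiJ k :=
        le_trans (Nat.sub_le_sub_left h1 _) (le_of_eq (by simp))
      exact Nat.mul_le_mul_left _ h2
    calc (PF ∪ QF).card ≤ PF.card + QF.card := Finset.card_union_le _ _
      _ ≤ m * hiJ k + m * hiJ k := Nat.add_le_add hP hQ
      _ ≤ (4*k+4) * m^3 := by
          simp only [hhiJ, hM']
          have : m * ((k + 2 + k) * m ^ 2) + m * ((k + 2 + k) * m ^ 2) = (4*k+4) * m^3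
              ∨ m * ((k + 2 + k) * m ^ 2) + m * ((k + 2 + k) * m ^ 2) ≤ (4*k+4) * m^3 := by
            left; ring
          rcases this with h | h
          · exact le_of_eq h
          · exact h
  · intro E hE0E
    have hAsub : ∀ ℓ, ℓ ≤ k → A ℓ ⊆ (↑(PF ∪ QF) : Set (Fin d → ℝ)) := by
      intro ℓ hℓ x hx
      by_cases hpe : ℓ % 2 = 0
      · simp only [hA] at hx; rw [if_pos hpe] at hx
        obtain ⟨i, j, h1, h2, h3, h4, hxeq⟩ := hx
        apply Finset.mem_coe.mpr
        apply Finset.mem_union_left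
        simp only [hPF]
        apply Finset.mem_image.mpr
        refine ⟨(i,j), Finset.mem_product.mpr ⟨Finset.mem_Icc.mpr ⟨h1, h2⟩,
          Finset.mem_Icc.mpr ⟨?_, ?_⟩⟩, hxeq.symm⟩
        · refine le_trans ?_ h3
          simp only [hloJ]
          exact Nat.add_le_add_right (Nat.mul_le_mul_right _ (by omega)) _
        · refine le_trans h4 ?_
          simp only [hhiJ]
          exact Nat.mul_le_mul_right _ (by omega)
      · simp only [hA] at hx; rw [if_neg hpe] at hx
        obtain ⟨u, N, h1, h2, h3, h4, hxeq⟩ := hx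
        apply Finset.mem_coe.mpr
        apply Finset.mem_union_right
        simp only [hQF]
        apply Finset.mem_image.mpr
        refine ⟨(u,N), Finset.mem_product.mpr ⟨Finset.mem_Icc.mpr ⟨h1, h2⟩,
          Finset.mem_Icc.mpr ⟨?_, ?_⟩⟩, hxeq.symm⟩
        · refine le_trans ?_ h3
          simp only [hloN]
          exact Nat.add_le_add_right (Nat.mul_le_mul_right _ (by omega)) _
        · refine le_trans h4 ?_
          simp only [hhiJ]
          exact Nat.mul_le_mul_right _ (by omega)
    have hFS : ∀ cm, F cm ∈ {φ : V → (Fin d → ℝ) |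
        IsWeightedCopy G (fun _ => (1:ℝ)) (E : Set (Fin d → ℝ)) φ} := by
      intro cm
      obtain ⟨hinj, hmem, hR⟩ := hFprop cm
      refine ⟨hinj, ?_, ?_⟩
      · intro u
        have h1 := hmem u
        have h2 := hAsub (lvl u) (hlvl u) h1
        exact (Finset.coe_subset.mpr hE0E) h2
      · intro u v h
        exact hR u v h
    have hcount := ncard_ge_of_inj
      {φ : V → (Fin d → ℝ) | IsWeightedCopy G (fun _ => (1:ℝ)) (E : Set (Fin d → ℝ)) φ}
      E (fun φ hφ => hφ.2.1) F hFinj hFS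
    have hcardeq : Fintype.card ((V → Fin b) × Fin M') = b^(k+1) * M' := by
      rw [Fintype.card_prod, Fintype.card_fun, Fintype.card_fin, Fintype.card_fin, hcard]
    have hpow : b^(k+3) ≤ b^(k+1) * M' := by
      have h1 : b^2 ≤ M' := by
        rw [hM', hm]
        exact Nat.pow_le_pow_left (Nat.le_mul_of_pos_left b (by omega)) 2
      calc b^(k+3) = b^(k+1) * b^2 := by ring
        _ ≤ b^(k+1) * M' := Nat.mul_le_mul_left _ h1
    calc b^(k+3) ≤ b^(k+1) * M' := hpow
      _ = Fintype.card ((V → Fin b) × Fin M') := hcardeq.symm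
      _ ≤ _ := hcount

set_option maxHeartbeats 1000000 in
lemma biclique_case {d : ℕ} (hd : 3 ≤ d) {V : Type} [Fintype V] (G : SimpleGraph V)
    (hT : G.IsTree) (k b : ℕ) (hcard : Fintype.card V = k + 1) (hb : 1 ≤ b) :
    ∃ E0 : Finset (Fin d → ℝ), E0.card ≤ 2 * ((k+1)*b) ∧
      ∀ E : Finset (Fin d → ℝ), E0 ⊆ E →
        b ^ (k+1) ≤ ({φ : V → (Fin d → ℝ) |
          IsWeightedCopy G (fun _ => (1:ℝ)) (E : Set (Fin d → ℝ)) φ}).ncard := by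
  classical
  obtain ⟨r, par, lvl, h0, hparfull, hedge, hlvlb⟩ := tree_structure G hT
  have hpar : ∀ v, v ≠ r → lvl v = lvl (par v) + 1 := fun v hv => (hparfull v hv).2
  have hlvl : ∀ v, lvl v ≤ k := fun v => by have := hlvlb v; omega
  set m : ℕ := (k+1)*b with hm
  have h1d : 1 < d := by omega
  have h2d : 2 < d := by omega
  set i1 : Fin d := ⟨1, h1d⟩ with hi1
  set i2 : Fin d := ⟨2, h2d⟩ with hi2
  set e : V ≃ Fin (k+1) := Fintype.equivFinOfCardEq hcard with he
  set idx : V → Fin b → ℕ := fun v c => b * (e v) + c + 1 with hidx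
  have hidx1 : ∀ v c, 1 ≤ idx v c := fun v c => Nat.succ_le_succ (Nat.zero_le _)
  have hidxm : ∀ v c, idx v c ≤ m := by
    intro v c
    have h1 : (e v : ℕ) ≤ k := Nat.lt_succ_iff.mp (e v).isLt
    have h2 : (c : ℕ) + 1 ≤ b := c.isLt
    calc b * (e v) + (c : ℕ) + 1 ≤ b * k + ((c:ℕ) + 1) := by
          have := Nat.mul_le_mul_left b h1
          omega
      _ ≤ b * k + b := by omega
      _ = (k+1)*b := by ring
  have hidxinj : ∀ v c v' c', idx v c = idx v' c' → v = v' ∧ c = c' := by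
    intro v c v' c' h
    have h' : b * ↑(e v) + ↑c = b * ↑(e v') + ↑c' := Nat.succ_injective h
    have hdiv : ∀ (w : V) (cc : Fin b), (b * ↑(e w) + ↑cc) / b = (e w : ℕ) := by
      intro w cc
      rw [Nat.mul_add_div (by omega)]
      simp [Nat.div_eq_of_lt cc.isLt]
    have hmod : ∀ (w : V) (cc : Fin b), (b * ↑(e w) + ↑cc) % b = (cc : ℕ) := by
      intro w cc
      rw [Nat.mul_add_mod]
      exact Nat.mod_eq_of_lt cc.isLt
    have hv : (e v : ℕ) = (e v' : ℕ) := by rw [← hdiv v c, ← hdiv v' c', h']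
    have hc : (c : ℕ) = (c' : ℕ) := by rw [← hmod v c, ← hmod v' c', h']
    exact ⟨e.injective (Fin.ext hv), Fin.ext hc⟩
  set decode : ℝ → V := fun y => e.symm ⟨min k ((Int.toNat ⌊y⌋ - 1) / b), by omega⟩
    with hdec
  have hdecode : ∀ v c, decode ((idx v c : ℕ) : ℝ) = v := by
    intro v c
    refine Eq.trans ?_ (Equiv.symm_apply_apply e v)
    simp only [hdec]
    congr 1
    apply Fin.ext
    show min k ((Int.toNat ⌊((idx v c : ℕ):ℝ)⌋ - 1) / b) = ((e v : Fin (k+1)) : ℕ)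
    rw [Int.floor_natCast, Int.toNat_natCast]
    have h1 : idx v c - 1 = b * ↑(e v) + ↑c := by simp [hidx]
    have h2 : (b * ↑(e v) + ↑c) / b = (e v : ℕ) := by
      rw [Nat.mul_add_div (by omega)]
      simp [Nat.div_eq_of_lt c.isLt]
    rw [h1, h2]
    exact min_eq_right (Nat.lt_succ_iff.mp (e v).isLt)
  set A : ℕ → Set (Fin d → ℝ) := fun ℓ =>
    if ℓ % 2 = 0 then
      {x | ∃ t : ℕ, 1 ≤ t ∧ t ≤ m ∧ x = ptv 1 (t:ℝ) 0}
    else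
      {x | ∃ t : ℕ, 1 ≤ t ∧ t ≤ m ∧ x = ptv 1 0 (t:ℝ)} with hA
  set root : Fin b → Fin 1 → (Fin d → ℝ) :=
    fun c _ => ptv 1 ((idx r c : ℕ) : ℝ) 0 with hroot
  set step : (Fin d → ℝ) → ℕ → V → Fin b → (Fin d → ℝ) := fun _ ℓ v c =>
    if ℓ % 2 = 0 then ptv 1 0 ((idx v c : ℕ) : ℝ)
    else ptv 1 ((idx v c : ℕ) : ℝ) 0 with hstep
  set tag : (Fin d → ℝ) → V := fun x => if 1 ≤ x i1 then decode (x i1)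
    else decode (x i2) with htag
  have hpt1 : ∀ x y z : ℝ, ptv (d := d) x y z i1 = y := fun x y z => ptv_apply1 h1d x y z
  have hpt2 : ∀ x y z : ℝ, ptv (d := d) x y z i2 = z := fun x y z => ptv_apply2 h2d x y z
  have hrootinj : ∀ c mm c' mm', root c mm = root c' mm' → c = c' ∧ mm = mm' := by
    intro c mm c' mm' h
    have h1' := congrFun h i1
    simp only [hroot, hpt1] at h1'
    exact ⟨(hidxinj r c r c' (Nat.cast_injective h1')).2, Subsingleton.elim _ _⟩
  have hrootA : ∀ c mm, root c mm ∈ A 0 := by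
    intro c mm
    simp only [hA]
    rw [if_pos (by norm_num)]
    exact ⟨idx r c, hidx1 r c, hidxm r c, by simp only [hroot]⟩
  have hstepA : ∀ x ℓ v c, ℓ < k → x ∈ A ℓ → step x ℓ v c ∈ A (ℓ+1) := by
    intro x ℓ v c hk hx
    by_cases hpe : ℓ % 2 = 0
    · simp only [hstep, if_pos hpe, hA]
      rw [if_neg (show ¬((ℓ+1) % 2 = 0) by omega)]
      exact ⟨idx v c, hidx1 v c, hidxm v c, rfl⟩
    · simp only [hstep, if_neg hpe, hA]
      rw [if_pos (show (ℓ+1) % 2 = 0 by omega)]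
      exact ⟨idx v c, hidx1 v c, hidxm v c, rfl⟩
  have hstepR : ∀ x ℓ v c, ℓ < k → x ∈ A ℓ → dotProd x (step x ℓ v c) = 1 := by
    intro x ℓ v c hk hx
    by_cases hpe : ℓ % 2 = 0
    · simp only [hA] at hx; rw [if_pos hpe] at hx
      obtain ⟨t, ht1, htm, hxeq⟩ := hx
      simp only [hstep, if_pos hpe]
      rw [hxeq, dot_ptv3 hd]
      ring
    · simp only [hA] at hx; rw [if_neg hpe] at hx
      obtain ⟨t, ht1, htm, hxeq⟩ := hx
      simp only [hstep, if_neg hpe]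
      rw [hxeq, dot_ptv3 hd]
      ring
  have hstepinj : ∀ x ℓ v c c', ℓ < k → x ∈ A ℓ → step x ℓ v c = step x ℓ v c' → c = c' := by
    intro x ℓ v c c' hk hx heq
    by_cases hpe : ℓ % 2 = 0
    · simp only [hstep, if_pos hpe] at heq
      have h2' := congrFun heq i2
      simp only [hpt2] at h2'
      exact (hidxinj v c v c' (Nat.cast_injective h2')).2
    · simp only [hstep, if_neg hpe] at heq
      have h1' := congrFun heq i1
      simp only [hpt1] at h1'
      exact (hidxinj v c v c' (Nat.cast_injective h1')).2
  have htagroot : ∀ c mm, tag (root c mm) = r := by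
    intro c mm
    simp only [htag, hroot, hpt1]
    rw [if_pos]
    · exact hdecode r c
    · exact_mod_cast hidx1 r c
  have htagstep : ∀ x ℓ v c, ℓ < k → x ∈ A ℓ → tag (step x ℓ v c) = v := by
    intro x ℓ v c hk hx
    by_cases hpe : ℓ % 2 = 0
    · simp only [hstep, if_pos hpe, htag, hpt1, hpt2]
      rw [if_neg (by norm_num)]
      exact hdecode v c
    · simp only [hstep, if_neg hpe, htag, hpt1, hpt2]
      rw [if_pos (by exact_mod_cast hidx1 v c)]
      exact hdecode v c
  obtain ⟨F, hFinj, hFprop⟩ := countLemma G.Adj r par lvl k h0 hpar hlvl hedge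
    (fun x y => dotProd x y = 1) (fun x y h => (dotProd_comm y x).trans h)
    A root hrootinj hrootA step hstepinj hstepA hstepR tag htagroot htagstep
  set XF : Finset (Fin d → ℝ) := (Finset.Icc 1 m).image (fun t : ℕ => ptv 1 (t:ℝ) 0) with hXF
  set YF : Finset (Fin d → ℝ) := (Finset.Icc 1 m).image (fun t : ℕ => ptv 1 0 (t:ℝ)) with hYF
  refine ⟨XF ∪ YF, ?_, ?_⟩
  · calc (XF ∪ YF).card ≤ XF.card + YF.card := Finset.card_union_le _ _
      _ ≤ m + m := Nat.add_le_add
          (le_trans Finset.card_image_le (by rw [Nat.card_Icc]; simp))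
          (le_trans Finset.card_image_le (by rw [Nat.card_Icc]; simp))
      _ = 2 * ((k+1)*b) := by rw [← hm]; ring
  · intro E hE0E
    have hAsub : ∀ ℓ, ℓ ≤ k → A ℓ ⊆ (↑(XF ∪ YF) : Set (Fin d → ℝ)) := by
      intro ℓ hℓ x hx
      by_cases hpe : ℓ % 2 = 0
      · simp only [hA] at hx; rw [if_pos hpe] at hx
        obtain ⟨t, h1, h2, hxeq⟩ := hx
        apply Finset.mem_coe.mpr
        apply Finset.mem_union_left
        simp only [hXF]
        exact Finset.mem_image.mpr ⟨t, Finset.mem_Icc.mpr ⟨h1, h2⟩, hxeq.symm⟩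
      · simp only [hA] at hx; rw [if_neg hpe] at hx
        obtain ⟨t, h1, h2, hxeq⟩ := hx
        apply Finset.mem_coe.mpr
        apply Finset.mem_union_right
        simp only [hYF]
        exact Finset.mem_image.mpr ⟨t, Finset.mem_Icc.mpr ⟨h1, h2⟩, hxeq.symm⟩
    have hFS : ∀ cm, F cm ∈ {φ : V → (Fin d → ℝ) |
        IsWeightedCopy G (fun _ => (1:ℝ)) (E : Set (Fin d → ℝ)) φ} := by
      intro cm
      obtain ⟨hinj, hmem, hR⟩ := hFprop cm
      refine ⟨hinj, ?_, ?_⟩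
      · intro u
        exact (Finset.coe_subset.mpr hE0E) (hAsub (lvl u) (hlvl u) (hmem u))
      · intro u v h
        exact hR u v h
    have hcount := ncard_ge_of_inj
      {φ : V → (Fin d → ℝ) | IsWeightedCopy G (fun _ => (1:ℝ)) (E : Set (Fin d → ℝ)) φ}
      E (fun φ hφ => hφ.2.1) F hFinj hFS
    have hcardeq : Fintype.card ((V → Fin b) × Fin 1) = b^(k+1) := by
      rw [Fintype.card_prod, Fintype.card_fun, Fintype.card_fin, Fintype.card_fin, hcard]
      ring
    calc b^(k+1) = Fintype.card ((V → Fin b) × Fin 1) := hcardeq.symm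
      _ ≤ _ := hcount

theorem stmt4 (d : ℕ) (hd : 2 ≤ d) (k : ℕ) {V : Type} [Fintype V]
    (G : SimpleGraph V) (hT : G.IsTree) (hke : G.edgeSet.ncard = k) :
    ∃ c : ℝ, 0 < c ∧ ∃ N : ℕ, ∀ n ≥ N,
      ∃ E : Finset (Fin d → ℝ), E.card = n ∧
        c * (n : ℝ) ^ (1 + (k : ℝ) * ((d : ℝ) - 1) / ((d : ℝ) + 1)) ≤
          (({φ : V → (Fin d → ℝ) |
            IsWeightedCopy G (fun _ => (1 : ℝ)) (E : Set (Fin d → ℝ)) φ}).ncard : ℝ) := by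
  classical
  -- card V = k + 1
  haveI : Fintype G.edgeSet := (Set.toFinite _).fintype
  have hedgecard := hT.card_edgeFinset
  have hne : Nonempty V := hT.isConnected.nonempty
  have hVpos : 0 < Fintype.card V := Fintype.card_pos
  have hkeq : G.edgeSet.ncard = G.edgeFinset.card := by
    rw [Set.ncard_eq_toFinset_card']
    simp only [SimpleGraph.edgeFinset]
  have hcard : Fintype.card V = k + 1 := by
    rw [hkeq] at hke
    omega
  haveI : Nonempty (Fin d) := ⟨⟨0, by omega⟩⟩
  haveI : Infinite (Fin d → ℝ) := inferInstance
  have hd2 : d = 2 ∨ 3 ≤ d := by omega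
  rcases hd2 with rfl | hd3
  · -- dimension 2 : grid construction
    have hexp : (1 + (k : ℝ) * (((2:ℕ) : ℝ) - 1) / (((2:ℕ) : ℝ) + 1)) = ((k:ℝ)+3)/3 := by
      norm_num
      ring
    set C : ℕ := (4*k+4) * (k+1)^3 with hC
    have hC1 : 1 ≤ C := Nat.one_le_iff_ne_zero.mpr (by positivity)
    set e : ℝ := ((k:ℝ)+3)/3 with hE
    set cR : ℝ := (8*(C:ℝ)) with hcR
    have hcRpos : 0 < cR := by positivity
    refine ⟨cR ^ (-e), Real.rpow_pos_of_pos hcRpos _, 8*C, ?_⟩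
    intro n hn
    set b : ℕ := ⌊((n:ℝ)/(C:ℝ)) ^ ((1:ℝ)/3)⌋₊ with hb
    have hnC : (C:ℝ) ≤ (n:ℝ) := by
      have : C ≤ n := by omega
      exact_mod_cast this
    have hx1 : (1:ℝ) ≤ (n:ℝ)/(C:ℝ) := (one_le_div (by positivity)).mpr hnC
    have hy1 : (1:ℝ) ≤ ((n:ℝ)/(C:ℝ)) ^ ((1:ℝ)/3) := by
      calc (1:ℝ) = (1:ℝ) ^ ((1:ℝ)/3) := (Real.one_rpow _).symm
        _ ≤ ((n:ℝ)/(C:ℝ)) ^ ((1:ℝ)/3) :=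
            Real.rpow_le_rpow (by norm_num) hx1 (by norm_num)
    have hb1 : 1 ≤ b := by
      rw [hb]
      exact Nat.le_floor (by exact_mod_cast hy1)
    have hble : ((b:ℝ)) ≤ ((n:ℝ)/(C:ℝ)) ^ ((1:ℝ)/3) := Nat.floor_le (by positivity)
    have hcube : (((n:ℝ)/(C:ℝ)) ^ ((1:ℝ)/3)) ^ (3:ℕ) = (n:ℝ)/(C:ℝ) := by
      rw [← Real.rpow_natCast (((n:ℝ)/(C:ℝ)) ^ ((1:ℝ)/3)) 3, ← Real.rpow_mul (by positivity)]
      norm_num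
    have hCb : C * b^3 ≤ n := by
      have h1 : ((b:ℝ))^(3:ℕ) ≤ (n:ℝ)/(C:ℝ) := by
        rw [← hcube]
        exact pow_le_pow_left₀ (by positivity) hble 3
      have h2 : ((C:ℝ)) * ((b:ℝ))^(3:ℕ) ≤ (n:ℝ) := by
        rw [← le_div_iff₀' (by positivity)]
        exact h1
      exact_mod_cast h2
    have hlt : (n:ℝ) < 8*(C:ℝ)*((b:ℝ))^(3:ℕ) := by
      have h1 : ((n:ℝ)/(C:ℝ)) ^ ((1:ℝ)/3) < (b:ℝ) + 1 := Nat.lt_floor_add_one _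
      have h2 : (n:ℝ)/(C:ℝ) < ((b:ℝ)+1)^(3:ℕ) := by
        rw [← hcube]
        exact pow_lt_pow_left₀ h1 (by positivity) (by norm_num)
      have h3 : ((b:ℝ)+1) ≤ 2*(b:ℝ) := by
        have : (1:ℝ) ≤ (b:ℝ) := by exact_mod_cast hb1
        linarith
      have h4 : (n:ℝ)/(C:ℝ) < 8*((b:ℝ))^(3:ℕ) := by
        calc (n:ℝ)/(C:ℝ) < ((b:ℝ)+1)^(3:ℕ) := h2
          _ ≤ (2*(b:ℝ))^(3:ℕ) := pow_le_pow_left₀ (by positivity) h3 3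
          _ = 8*((b:ℝ))^(3:ℕ) := by ring
      calc (n:ℝ) = ((n:ℝ)/(C:ℝ)) * (C:ℝ) := by field_simp
        _ < (8*((b:ℝ))^(3:ℕ)) * (C:ℝ) := by
            apply mul_lt_mul_of_pos_right h4 (by positivity)
        _ = 8*(C:ℝ)*((b:ℝ))^(3:ℕ) := by ring
    obtain ⟨E0, hE0card, hE0count⟩ := grid_case (le_refl 2) G hT k b hcard hb1
    have hE0n : E0.card ≤ n := by
      refine le_trans hE0card (le_trans ?_ hCb)
      apply le_of_eq
      rw [hC]
      ring
    obtain ⟨E, hE0E, hEcard⟩ := exists_pad E0 n hE0n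
    refine ⟨E, hEcard, ?_⟩
    have hcount := hE0count E hE0E
    have hcountR : ((b:ℝ))^(k+3) ≤ (({φ : V → (Fin 2 → ℝ) |
        IsWeightedCopy G (fun _ => (1 : ℝ)) (E : Set (Fin 2 → ℝ)) φ}).ncard : ℝ) := by
      exact_mod_cast hcount
    rw [hexp]
    have hkey : cR ^ (-e) * (n:ℝ) ^ e ≤ ((b:ℝ))^(k+3) := by
      have hn0 : (0:ℝ) ≤ (n:ℝ) := by positivity
      have h1 : (n:ℝ) ^ e ≤ (cR*((b:ℝ))^(3:ℕ)) ^ e := by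
        have hle : (n:ℝ) ≤ cR*((b:ℝ))^(3:ℕ) := by rw [hcR]; exact le_of_lt hlt
        have he0 : (0:ℝ) ≤ e := by rw [hE]; positivity
        exact Real.rpow_le_rpow hn0 hle he0
      have h2 : (cR*((b:ℝ))^(3:ℕ)) ^ e = cR ^ e * (((b:ℝ))^(3:ℕ)) ^ e := by
        apply Real.mul_rpow (le_of_lt hcRpos) (by positivity)
      have h3 : (((b:ℝ))^(3:ℕ)) ^ e = ((b:ℝ))^(k+3) := by
        rw [← Real.rpow_natCast ((b:ℝ)) 3, ← Real.rpow_mul (by positivity)]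
        have : (((3:ℕ)):ℝ) * e = (((k+3:ℕ)):ℝ) := by
          rw [hE]
          push_cast
          ring
        rw [this, Real.rpow_natCast]
      have h4 : cR ^ (-e) * cR ^ e = 1 := by
        rw [← Real.rpow_add hcRpos]
        norm_num
      calc cR ^ (-e) * (n:ℝ) ^ e ≤ cR ^ (-e) * (cR ^ e * ((b:ℝ))^(k+3)) := by
            rw [← h3, ← h2]
            exact mul_le_mul_of_nonneg_left h1 (le_of_lt (Real.rpow_pos_of_pos hcRpos _))
        _ = (cR ^ (-e) * cR ^ e) * ((b:ℝ))^(k+3) := by ring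
        _ = ((b:ℝ))^(k+3) := by rw [h4]; ring
    exact le_trans hkey hcountR
  · -- dimension ≥ 3 : biclique construction
    set C : ℕ := 2*(k+1) with hC
    have hC1 : 1 ≤ C := Nat.one_le_iff_ne_zero.mpr (by positivity)
    set cR : ℝ := ((2*C : ℕ):ℝ) with hcR
    have hcRpos : 0 < cR := by rw [hcR]; positivity
    refine ⟨(cR)⁻¹ ^ (k+1), by positivity, 4*C, ?_⟩
    intro n hn
    set b : ℕ := n / C with hb
    have hb1 : 1 ≤ b := by
      rw [hb]
      exact (Nat.one_le_div_iff (by omega)).mpr (by omega)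
    have hCb : C * b ≤ n := by
      rw [hb]
      exact Nat.mul_div_le n C
    have hn2Cb : n ≤ 2*C*b := by
      have h1 : C * b + n % C = n := by rw [hb]; exact Nat.div_add_mod n C
      have h2 : n % C < C := Nat.mod_lt _ (by omega)
      have h3 : C ≤ C * b := Nat.le_mul_of_pos_right C (by omega)
      have h4 : 2*C*b = C*b + C*b := by ring
      rw [h4]
      generalize C * b = t at h1 h3 ⊢
      omega
    obtain ⟨E0, hE0card, hE0count⟩ := biclique_case hd3 G hT k b hcard hb1
    have hE0n : E0.card ≤ n := by
      refine le_trans hE0card (le_trans ?_ hCb)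
      apply le_of_eq
      rw [hC]
      ring
    obtain ⟨E, hE0E, hEcard⟩ := exists_pad E0 n hE0n
    refine ⟨E, hEcard, ?_⟩
    have hcount := hE0count E hE0E
    have hcountR : ((b:ℝ))^(k+1) ≤ (({φ : V → (Fin d → ℝ) |
        IsWeightedCopy G (fun _ => (1 : ℝ)) (E : Set (Fin d → ℝ)) φ}).ncard : ℝ) := by
      exact_mod_cast hcount
    have hn1 : (1:ℝ) ≤ (n:ℝ) := by
      have : 1 ≤ n := by omega
      exact_mod_cast this
    have hexple : 1 + (k : ℝ) * ((d : ℝ) - 1) / ((d : ℝ) + 1) ≤ (((k+1:ℕ)):ℝ) := by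
      have hdpos : (0:ℝ) < (d:ℝ) + 1 := by positivity
      have h1 : (k : ℝ) * ((d : ℝ) - 1) / ((d : ℝ) + 1) ≤ (k:ℝ) := by
        rw [div_le_iff₀ hdpos]
        have hk0 : (0:ℝ) ≤ (k:ℝ) := by positivity
        nlinarith
      push_cast
      linarith
    have hnb : (n:ℝ) ≤ ((2*C*b : ℕ):ℝ) := by exact_mod_cast hn2Cb
    calc (cR)⁻¹ ^ (k+1) * (n : ℝ) ^ (1 + (k : ℝ) * ((d : ℝ) - 1) / ((d : ℝ) + 1))
        ≤ (cR)⁻¹ ^ (k+1) * (n:ℝ) ^ ((((k+1:ℕ)):ℝ)) := by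
          have hmono := Real.rpow_le_rpow_of_exponent_le hn1 hexple
          have hc0 : (0:ℝ) ≤ (cR)⁻¹ ^ (k+1) := by positivity
          exact mul_le_mul_of_nonneg_left hmono hc0
      _ = (cR)⁻¹ ^ (k+1) * (n:ℝ) ^ ((k+1:ℕ)) := by rw [Real.rpow_natCast]
      _ ≤ (cR)⁻¹ ^ (k+1) * ((2*C*b:ℕ):ℝ) ^ ((k+1:ℕ)) := by
          have hmono := pow_le_pow_left₀ (by positivity : (0:ℝ) ≤ (n:ℝ)) hnb (k+1)
          have hc0 : (0:ℝ) ≤ (cR)⁻¹ ^ (k+1) := by positivity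
          exact mul_le_mul_of_nonneg_left hmono hc0
      _ = (cR)⁻¹ ^ (k+1) * (cR ^ (k+1) * ((b:ℝ)) ^ (k+1)) := by
          rw [hcR]
          push_cast
          ring
      _ = ((cR)⁻¹ * cR) ^ (k+1) * ((b:ℝ)) ^ (k+1) := by ring
      _ = ((b:ℝ)) ^ (k+1) := by
          rw [inv_mul_cancel₀ (ne_of_gt hcRpos), one_pow, one_mul]
      _ ≤ _ := hcountR
end

section
/- For every tree T with k edges there exists a constant c > 0 such that for every sufficiently large natural number n there exist a set E ⊆ ℝ³ of exactly n points and a weight assignment w : E(T) → ℝ \ {0} such that the number of copies of the weighted tree T_w in E is at least c · n^k. -/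
lemma tree_two_coloring {V : Type} (G : SimpleGraph V) (hT : G.IsTree) :
    ∃ col : V → Bool, ∀ u v, G.Adj u v → col u ≠ col v := by
  classical
  obtain ⟨root⟩ := hT.isConnected.nonempty
  choose p hp hup using fun v => hT.existsUnique_path v root
  refine ⟨fun v => decide ((p v).length % 2 = 0), ?_⟩
  intro u v huv hcol
  have key : (p u).length = (p v).length + 1 ∨ (p v).length = (p u).length + 1 := by
    by_cases h1 : u ∈ (p v).support
    · by_cases h2 : v ∈ (p u).support
      · exfalso
        have e1 : (p v).dropUntil u h1 = p u := hup u _ ((hp v).dropUntil h1)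
        have e2 : (p u).dropUntil v h2 = p v := hup v _ ((hp u).dropUntil h2)
        have l1 : (p u).length ≤ (p v).length := by
          rw [← e1]; exact SimpleGraph.Walk.length_dropUntil_le _ h1
        have l2 : (p v).length ≤ (p u).length := by
          rw [← e2]; exact SimpleGraph.Walk.length_dropUntil_le _ h2
        have hlen := congr_arg SimpleGraph.Walk.length ((p v).take_spec h1)
        rw [SimpleGraph.Walk.length_append, e1] at hlen
        have h0 : ((p v).takeUntil u h1).length = 0 := by omega
        have := SimpleGraph.Walk.eq_of_length_eq_zero h0
        exact huv.ne' this
      · right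
        have : (SimpleGraph.Walk.cons huv.symm (p u)) = p v :=
          hup v _ ((hp u).cons h2)
        rw [← this, SimpleGraph.Walk.length_cons]
    · left
      have : (SimpleGraph.Walk.cons huv (p v)) = p u :=
        hup u _ ((hp v).cons h1)
      rw [← this, SimpleGraph.Walk.length_cons]
  simp only [decide_eq_decide] at hcol
  omega

noncomputable def pt (b : Bool) (t : ℝ) : Fin 3 → ℝ := if b then ![1, t, 0] else ![1, 0, t]

lemma pt_inj {b b' : Bool} {t t' : ℝ} (ht : 0 < t) (ht' : 0 < t')
    (h : pt b t = pt b' t') : b = b' ∧ t = t' := by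
  have h1 := congrFun h 1
  have h2 := congrFun h 2
  cases b <;> cases b' <;> simp [pt] at h1 h2
  · exact ⟨rfl, h2⟩
  · exfalso; linarith
  · exfalso; linarith
  · exact ⟨rfl, h1⟩

lemma dot_pt (x y : ℝ) : dotProd (pt true x) (pt false y) = 1 ∧
    dotProd (pt false x) (pt true y) = 1 := by
  constructor <;> simp [dotProd, pt, Fin.sum_univ_three]

theorem stmt13 (k : ℕ) {V : Type} [Fintype V] (G : SimpleGraph V)
    (hT : G.IsTree) (hke : G.edgeSet.ncard = k) :
    ∃ c : ℝ, 0 < c ∧ ∃ N : ℕ, ∀ n ≥ N,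
      ∃ (E : Finset (Fin 3 → ℝ)) (w : G.edgeSet → ℝ), E.card = n ∧ (∀ e, w e ≠ 0) ∧
        c * (n : ℝ) ^ k ≤
          (({φ : V → (Fin 3 → ℝ) |
            IsWeightedCopy G w (E : Set (Fin 3 → ℝ)) φ}).ncard : ℝ) := by
  classical
  obtain ⟨col, hcol⟩ := tree_two_coloring G hT
  have hne : Nonempty V := hT.isConnected.nonempty
  set r := Fintype.card V with hr
  have hrk : r = k + 1 := by
    have hfe : Fintype G.edgeSet := Fintype.ofFinite _
    have h1 := hT.card_edgeFinset
    have h2 : G.edgeSet.ncard = G.edgeFinset.card := by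
      rw [Set.ncard_eq_toFinset_card']
      exact Finset.card_bij (fun e _ => e) (by simp) (by simp) (by simp)
    have h3 : 1 ≤ r := Fintype.card_pos
    rw [h2] at hke
    omega
  refine ⟨(4:ℝ)⁻¹ ^ r, by positivity, 4*r + 4, ?_⟩
  intro n hn
  set a := n / 2 with ha
  set f : ℕ → (Fin 3 → ℝ) := fun i =>
    if i < a then pt true ((i : ℝ) + 1) else pt false (((i - a : ℕ) : ℝ) + 1) with hf
  have hfvals : ∀ i, (i < a → f i = pt true ((i:ℝ)+1)) ∧
      (a ≤ i → f i = pt false (((i - a : ℕ):ℝ)+1)) := by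
    intro i
    constructor <;> intro h
    · simp only [hf]; rw [if_pos h]
    · simp only [hf]; rw [if_neg (by omega)]
  have hfinj : Set.InjOn f (Finset.range n) := by
    intro i _ j _ hij
    by_cases hi : i < a <;> by_cases hj : j < a
    · rw [(hfvals i).1 hi, (hfvals j).1 hj] at hij
      have := (pt_inj (by positivity) (by positivity) hij).2
      have : (i : ℝ) = j := by linarith
      exact_mod_cast this
    · rw [(hfvals i).1 hi, (hfvals j).2 (by omega)] at hij
      exact absurd (pt_inj (by positivity) (by positivity) hij).1 (by simp)
    · rw [(hfvals i).2 (by omega), (hfvals j).1 hj] at hij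
      exact absurd (pt_inj (by positivity) (by positivity) hij).1 (by simp)
    · rw [(hfvals i).2 (by omega), (hfvals j).2 (by omega)] at hij
      have h2 := (pt_inj (by positivity) (by positivity) hij).2
      have h3 : ((i - a : ℕ) : ℝ) = ((j - a : ℕ) : ℝ) := by linarith
      have h4 : i - a = j - a := by exact_mod_cast h3
      omega
  set E := Finset.image f (Finset.range n) with hE
  have hEcard : E.card = n := by
    rw [hE, Finset.card_image_of_injOn hfinj, Finset.card_range]
  refine ⟨E, fun _ => 1, hEcard, fun _ => one_ne_zero, ?_⟩
  set Φ : (V ↪ Fin a) → (V → Fin 3 → ℝ) :=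
    fun g v => pt (col v) (((g v : ℕ) : ℝ) + 1) with hΦ
  set S := {φ : V → (Fin 3 → ℝ) |
      IsWeightedCopy G (fun _ => (1:ℝ)) (E : Set (Fin 3 → ℝ)) φ} with hSdef
  have ha2 : 2 * a ≤ n := by omega
  have hΦval : ∀ (g : V ↪ Fin a) v, Φ g v = pt (col v) (((g v : ℕ) : ℝ) + 1) := fun _ _ => rfl
  have hmem : ∀ (g : V ↪ Fin a) v, Φ g v ∈ E := by
    intro g v
    rw [hE]
    simp only [Finset.mem_image, Finset.mem_range]
    cases hcv : col v
    · refine ⟨a + (g v : ℕ), by omega, ?_⟩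
      rw [(hfvals _).2 (by omega), hΦval, hcv, Nat.add_sub_cancel_left]
    · exact ⟨(g v : ℕ), by omega, by rw [(hfvals _).1 (g v).isLt, hΦval, hcv]⟩
  have hcopy : ∀ g, Φ g ∈ S := by
    intro g
    refine ⟨?_, hmem g, ?_⟩
    · intro u v huv
      rw [hΦval, hΦval] at huv
      by_cases hc : col u = col v
      · rw [hc] at huv
        have h2 := (pt_inj (by positivity) (by positivity) huv).2
        have h3 : ((g u : ℕ) : ℝ) = ((g v : ℕ) : ℝ) := by linarith
        have h4 : (g u : ℕ) = (g v : ℕ) := by exact_mod_cast h3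
        exact g.injective (Fin.ext h4)
      · exact absurd (pt_inj (by positivity) (by positivity) huv).1 hc
    · intro u v huv
      have hne := hcol u v huv
      rw [hΦval, hΦval]
      cases hcu : col u <;> cases hcv : col v <;> rw [hcu, hcv] at hne
      · exact absurd rfl hne
      · exact (dot_pt _ _).2
      · exact (dot_pt _ _).1
      · exact absurd rfl hne
  have hΦinj : Function.Injective Φ := by
    intro g g' h
    ext v
    have h1 := congrFun h v
    rw [hΦval, hΦval] at h1
    have h2 := (pt_inj (by positivity) (by positivity) h1).2
    have h3 : ((g v : ℕ) : ℝ) = ((g' v : ℕ) : ℝ) := by linarith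
    exact_mod_cast h3
  have hSfin : S.Finite := by
    apply Set.Finite.subset (Set.Finite.pi (fun _ : V => E.finite_toSet))
    intro φ hφ i _
    exact hφ.2.1 i
  have hcount : (a.descFactorial r : ℕ) ≤ S.ncard := by
    have h1 : Set.range Φ ⊆ S := by rintro _ ⟨g, rfl⟩; exact hcopy g
    have h2 : (Set.range Φ).ncard = Nat.card (V ↪ Fin a) := by
      rw [← Nat.card_coe_set_eq, Nat.card_range_of_injective hΦinj]
    have h3 : Nat.card (V ↪ Fin a) = a.descFactorial r := by
      rw [Nat.card_eq_fintype_card, Fintype.card_embedding_eq, Fintype.card_fin]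
    calc a.descFactorial r = (Set.range Φ).ncard := by rw [h2, h3]
      _ ≤ S.ncard := Set.ncard_le_ncard h1 hSfin
  set M := a + 1 - r with hM
  have hMd : M ^ r ≤ a.descFactorial r := Nat.pow_sub_le_descFactorial a r
  have hM4 : (n : ℝ) ≤ 4 * M := by
    have : n ≤ 4 * M := by omega
    exact_mod_cast this
  have hn1 : (1 : ℝ) ≤ n := by exact_mod_cast Nat.one_le_iff_ne_zero.mpr (by omega)
  have hn0 : (0 : ℝ) ≤ n := by linarith
  calc (4:ℝ)⁻¹ ^ r * (n:ℝ) ^ k ≤ (4:ℝ)⁻¹ ^ r * (n:ℝ) ^ k * n :=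
        le_mul_of_one_le_right (by positivity) hn1
    _ = ((n:ℝ)/4) ^ r := by rw [hrk]; field_simp; ring
    _ ≤ (M : ℝ) ^ r := by
        apply pow_le_pow_left₀ (by linarith) (by linarith)
    _ = ((M ^ r : ℕ) : ℝ) := by push_cast; ring
    _ ≤ ((a.descFactorial r : ℕ) : ℝ) := by exact_mod_cast hMd
    _ ≤ (S.ncard : ℝ) := by exact_mod_cast hcount
end
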